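/- Let ψ(q) = #{(m,n): m ≥ n ≥ 0, C(m,n) odd, m + 2n = q} and M(u) = Σ_{0 ≤ q < u} ψ(q). Then for every positive integer u and nonnegative integer k, M(2^k u) = 3^k·M(u) − Σ_{l=0}^{k−1} 3^l·ψ(2^{k−l−1}u − 1). -/

import Mathlib

/-!
By Lucas' theorem, `C(2m + a, 2n + b) ≡ C(a, b) C(m, n) (mod 2)` for bits `a, b`. Sorting the
pairs counted by `ψ` by the parities of their entries gives `ψ(2q) = ψ(q)` and
`ψ(2q + 1) = ψ(q) + ψ(q - 1)`. Summing over `q < u`, and using `ψ(-1) = 0`, yields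
`M(2u) = 3 M(u) - ψ(u - 1)`, which iterated `k` times is the theorem.
-/

/-- `ψ(q)`: number of `(m,n)` with `m ≥ n ≥ 0`, `C(m,n)` odd and `m + 2n = q`
(extended by `0` to negative `q`). -/
noncomputable def psi (q : ℤ) : ℕ :=
  {mn : ℕ × ℕ | mn.2 ≤ mn.1 ∧ (mn.1 : ℤ) + 2 * (mn.2 : ℤ) = q ∧
    ¬ 2 ∣ Nat.choose mn.1 mn.2}.ncard

/-- `M(u) = Σ_{0 ≤ q < u} ψ(q)`. -/
noncomputable def Mfun (u : ℕ) : ℕ := ∑ q ∈ Finset.range u, psi (q : ℤ)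

open Finset

namespace Nat

theorem two_dvd_choose_two_mul_add_iff (m n a b : ℕ) (ha : a < 2) (hb : b < 2) :
    2 ∣ choose (2 * m + a) (2 * n + b) ↔ 2 ∣ choose a b * choose m n := by
  have lucas := Choose.choose_modEq_choose_mod_mul_choose_div_nat
    (n := 2 * m + a) (k := 2 * n + b) (p := 2)
  rw [lucas.dvd_iff dvd_rfl, show (2 * m + a) % 2 = a by omega, show (2 * n + b) % 2 = b by omega,
    show (2 * m + a) / 2 = m by omega, show (2 * n + b) / 2 = n by omega]

theorem two_dvd_choose_two_mul_iff (m n : ℕ) : 2 ∣ choose (2 * m) (2 * n) ↔ 2 ∣ choose m n := by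
  simpa using two_dvd_choose_two_mul_add_iff m n 0 0 (by omega) (by omega)

theorem two_dvd_choose_two_mul_add_one (m n : ℕ) : 2 ∣ choose (2 * m) (2 * n + 1) := by
  simpa using two_dvd_choose_two_mul_add_iff m n 0 1 (by omega) (by omega)

theorem two_dvd_choose_two_mul_add_one_two_mul_iff (m n : ℕ) :
    2 ∣ choose (2 * m + 1) (2 * n) ↔ 2 ∣ choose m n := by
  simpa using two_dvd_choose_two_mul_add_iff m n 1 0 (by omega) (by omega)

theorem two_dvd_choose_two_mul_add_one_two_mul_add_one_iff (m n : ℕ) :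
    2 ∣ choose (2 * m + 1) (2 * n + 1) ↔ 2 ∣ choose m n := by
  simpa using two_dvd_choose_two_mul_add_iff m n 1 1 (by omega) (by omega)

end Nat

/-- The pairs counted by `psi q`, without its condition `n ≤ m`, which oddness of `C(m, n)` forces. -/
def oddChoosePairs (q : ℤ) : Set (ℕ × ℕ) :=
  {p | (p.1 : ℤ) + 2 * p.2 = q ∧ ¬ 2 ∣ p.1.choose p.2}

theorem psi_eq_ncard_oddChoosePairs (q : ℤ) : psi q = (oddChoosePairs q).ncard := by
  refine congrArg Set.ncard (Set.ext fun p => ⟨fun h => h.2, fun h => ⟨?_, h⟩⟩)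
  by_contra hlt
  exact h.2 (by rw [Nat.choose_eq_zero_of_lt (not_le.mp hlt)]; exact dvd_zero 2)

theorem oddChoosePairs_finite (q : ℤ) : (oddChoosePairs q).Finite :=
  (Set.finite_Iic (q.toNat, q.toNat)).subset fun p hp => by
    obtain ⟨hsum, -⟩ := hp
    simp only [Set.mem_Iic, Prod.le_def]
    omega

theorem psi_eq_zero_of_neg {q : ℤ} (hq : q < 0) : psi q = 0 := by
  rw [psi_eq_ncard_oddChoosePairs, Set.ncard_eq_zero (oddChoosePairs_finite q)]
  exact Set.eq_empty_of_forall_notMem fun p hp => by have := hp.1; omega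

def appendBits (a b : ℕ) (p : ℕ × ℕ) : ℕ × ℕ := (2 * p.1 + a, 2 * p.2 + b)

theorem appendBits_injective (a b : ℕ) : Function.Injective (appendBits a b) := by
  rintro ⟨m, n⟩ ⟨m', n'⟩ h
  simp only [appendBits, Prod.mk.injEq] at h ⊢
  omega

theorem oddChoosePairs_two_mul (q : ℤ) :
    oddChoosePairs (2 * q) = appendBits 0 0 '' oddChoosePairs q := by
  refine Set.Subset.antisymm ?_ ?_
  · rintro ⟨x, y⟩ ⟨hsum, hodd⟩
    obtain ⟨m, rfl | rfl⟩ := Nat.even_or_odd' x <;> obtain ⟨n, rfl | rfl⟩ := Nat.even_or_odd' y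
    · exact ⟨(m, n), ⟨by push_cast at hsum; omega, by rwa [← Nat.two_dvd_choose_two_mul_iff]⟩, rfl⟩
    · exact absurd (Nat.two_dvd_choose_two_mul_add_one m n) hodd
    all_goals push_cast at hsum; omega
  · rintro _ ⟨⟨m, n⟩, ⟨hsum, hodd⟩, rfl⟩
    exact ⟨by simp only [appendBits]; push_cast; omega,
      by simpa [appendBits, Nat.two_dvd_choose_two_mul_iff] using hodd⟩

theorem oddChoosePairs_two_mul_add_one (q : ℤ) :
    oddChoosePairs (2 * q + 1) =
      appendBits 1 0 '' oddChoosePairs q ∪ appendBits 1 1 '' oddChoosePairs (q - 1) := by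
  refine Set.Subset.antisymm ?_ ?_
  · rintro ⟨x, y⟩ ⟨hsum, hodd⟩
    obtain ⟨m, rfl | rfl⟩ := Nat.even_or_odd' x
    · push_cast at hsum; omega
    obtain ⟨n, rfl | rfl⟩ := Nat.even_or_odd' y
    · exact .inl ⟨(m, n), ⟨by push_cast at hsum; omega,
        by rwa [← Nat.two_dvd_choose_two_mul_add_one_two_mul_iff]⟩, rfl⟩
    · exact .inr ⟨(m, n), ⟨by push_cast at hsum; omega,
        by rwa [← Nat.two_dvd_choose_two_mul_add_one_two_mul_add_one_iff]⟩, rfl⟩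
  · rintro _ (⟨⟨m, n⟩, ⟨hsum, hodd⟩, rfl⟩ | ⟨⟨m, n⟩, ⟨hsum, hodd⟩, rfl⟩)
    · exact ⟨by simp only [appendBits]; push_cast; omega,
        by simpa [appendBits, Nat.two_dvd_choose_two_mul_add_one_two_mul_iff] using hodd⟩
    · exact ⟨by simp only [appendBits]; push_cast; omega,
        by simpa [appendBits, Nat.two_dvd_choose_two_mul_add_one_two_mul_add_one_iff] using hodd⟩

theorem psi_two_mul (q : ℤ) : psi (2 * q) = psi q := by
  rw [psi_eq_ncard_oddChoosePairs, psi_eq_ncard_oddChoosePairs, oddChoosePairs_two_mul,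
    Set.ncard_image_of_injective _ (appendBits_injective 0 0)]

theorem psi_two_mul_add_one (q : ℤ) : psi (2 * q + 1) = psi q + psi (q - 1) := by
  have hdisj :
      Disjoint (appendBits 1 0 '' oddChoosePairs q) (appendBits 1 1 '' oddChoosePairs (q - 1)) :=
    Set.disjoint_left.mpr fun _ ⟨_, _, h⟩ ⟨_, _, h'⟩ => by
      simp only [appendBits, ← h', Prod.mk.injEq] at h
      omega
  rw [psi_eq_ncard_oddChoosePairs, psi_eq_ncard_oddChoosePairs, psi_eq_ncard_oddChoosePairs,
    oddChoosePairs_two_mul_add_one, Set.ncard_union_eq hdisj ((oddChoosePairs_finite q).image _)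
      ((oddChoosePairs_finite (q - 1)).image _),
    Set.ncard_image_of_injective _ (appendBits_injective 1 0),
    Set.ncard_image_of_injective _ (appendBits_injective 1 1)]

theorem Mfun_two_mul (u : ℕ) : (Mfun (2 * u) : ℤ) = 3 * Mfun u - psi ((u : ℤ) - 1) := by
  induction u with
  | zero => simp [Mfun, psi_eq_zero_of_neg]
  | succ u ih =>
    simp only [Mfun, Nat.mul_succ, sum_range_succ] at ih ⊢
    push_cast at ih ⊢
    rw [psi_two_mul, psi_two_mul_add_one, add_sub_cancel_right]
    push_cast
    linarith

theorem Mfun_pow_mul_general (u : ℕ) (k : ℕ) :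
    (Mfun (2 ^ k * u) : ℤ) =
      3 ^ k * Mfun u - ∑ l ∈ Finset.range k, 3 ^ l * psi ((2 : ℤ) ^ (k - l - 1) * u - 1) := by
  induction k with
  | zero => simp
  | succ k ih =>
    rw [pow_succ', mul_assoc, Mfun_two_mul, ih, sum_range_succ']
    push_cast
    simp only [pow_succ', mul_assoc, ← mul_sum]
    ring

theorem Mfun_pow_mul (u : ℕ) (hu : 0 < u) (k : ℕ) :
    (Mfun (2 ^ k * u) : ℤ) =
      3 ^ k * Mfun u - ∑ l ∈ Finset.range k, 3 ^ l * psi ((2 : ℤ) ^ (k - l - 1) * u - 1) :=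
  Mfun_pow_mul_general u k
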